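/- Let I be an instance of SPA-ST. For any two super-stable matchings M1 and M2 in I and every lecturer l_k, the number of students assigned to l_k in M1 equals the number of students assigned to l_k in M2. -/

import Mathlib

open scoped Classical

/-- An instance of the Student-Project Allocation problem with lecturer
preferences over students, with Ties (SPA-ST).  `sPref s p q` means student `s`
ranks project `p` at least as highly as project `q` (`p ⪰_s q`); `lPref k t t'`
means lecturer `k` ranks student `t` at least as highly as student `t'`. -/
structure SPAST (S P L : Type) [Fintype S] [Fintype P] [Fintype L]
    [DecidableEq S] [DecidableEq P] [DecidableEq L] where
  /-- the lecturer offering each project -/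
  lec : P → L
  /-- project capacities -/
  c : P → ℕ
  /-- lecturer capacities -/
  d : L → ℕ
  cpos : ∀ p : P, 0 < c p
  dpos : ∀ k : L, 0 < d k
  /-- the set of projects acceptable to each student -/
  acc : S → Finset P
  sPref : S → P → P → Prop
  lPref : L → S → S → Prop
  sRefl : ∀ s : S, ∀ p ∈ acc s, sPref s p p
  sTrans : ∀ s : S, ∀ p ∈ acc s, ∀ q ∈ acc s, ∀ r ∈ acc s,
    sPref s p q → sPref s q r → sPref s p r
  sTotal : ∀ s : S, ∀ p ∈ acc s, ∀ q ∈ acc s, sPref s p q ∨ sPref s q p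
  lRefl : ∀ k : L, ∀ t : S, (∃ p ∈ acc t, lec p = k) → lPref k t t
  lTrans : ∀ k : L, ∀ t1 t2 t3 : S,
    (∃ p ∈ acc t1, lec p = k) → (∃ p ∈ acc t2, lec p = k) → (∃ p ∈ acc t3, lec p = k) →
    lPref k t1 t2 → lPref k t2 t3 → lPref k t1 t3
  lTotal : ∀ k : L, ∀ t1 t2 : S,
    (∃ p ∈ acc t1, lec p = k) → (∃ p ∈ acc t2, lec p = k) →
    lPref k t1 t2 ∨ lPref k t2 t1
  capLB : ∀ p : P, c p ≤ d (lec p)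
  capUB : ∀ k : L, d k ≤ ∑ p ∈ Finset.univ.filter (fun p => lec p = k), c p

namespace SPAST

variable {S P L : Type} [Fintype S] [Fintype P] [Fintype L]
  [DecidableEq S] [DecidableEq P] [DecidableEq L]

/-- `M` is a matching: pairs are acceptable, each student is matched at most once,
and project and lecturer capacities are respected. -/
def IsMatching (I : SPAST S P L) (M : Finset (S × P)) : Prop :=
  (∀ x ∈ M, x.2 ∈ I.acc x.1) ∧
  (∀ s : S, ∀ p q : P, (s, p) ∈ M → (s, q) ∈ M → p = q) ∧
  (∀ p : P, (M.filter (fun x => x.2 = p)).card ≤ I.c p) ∧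
  (∀ k : L, (M.filter (fun x => I.lec x.2 = k)).card ≤ I.d k)

/-- The set `M(p)` of students assigned to project `p` in `M`. -/
def projAsg (M : Finset (S × P)) (p : P) : Finset S :=
  (M.filter (fun x => x.2 = p)).image Prod.fst

/-- The set `M(l_k)` of students assigned to lecturer `k` in `M`. -/
def lecAsg (I : SPAST S P L) (M : Finset (S × P)) (k : L) : Finset S :=
  (M.filter (fun x => I.lec x.2 = k)).image Prod.fst

/-- `t` is a least-preferred (worst) student of lecturer `k` in the set `T`. -/
def WorstIn (I : SPAST S P L) (k : L) (T : Finset S) (t : S) : Prop :=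
  t ∈ T ∧ ∀ t' ∈ T, I.lPref k t' t

/-- `(s, p)` is a super-blocking pair for `M`. -/
def SuperBlocking (I : SPAST S P L) (M : Finset (S × P)) (s : S) (p : P) : Prop :=
  p ∈ I.acc s ∧ (s, p) ∉ M ∧
  (∀ q : P, (s, q) ∈ M → ¬(I.sPref s q p ∧ ¬I.sPref s p q)) ∧
  (((projAsg M p).card < I.c p ∧ (lecAsg I M (I.lec p)).card < I.d (I.lec p)) ∨
   ((projAsg M p).card < I.c p ∧ (lecAsg I M (I.lec p)).card = I.d (I.lec p) ∧
     (s ∈ lecAsg I M (I.lec p) ∨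
      ∃ t : S, WorstIn I (I.lec p) (lecAsg I M (I.lec p)) t ∧ I.lPref (I.lec p) s t)) ∨
   ((projAsg M p).card = I.c p ∧
     ∃ t : S, WorstIn I (I.lec p) (projAsg M p) t ∧ I.lPref (I.lec p) s t))

/-- `(s, p)` is a weakly-blocking pair for `M`. -/
def WeakBlocking (I : SPAST S P L) (M : Finset (S × P)) (s : S) (p : P) : Prop :=
  p ∈ I.acc s ∧ (s, p) ∉ M ∧
  (∀ q : P, (s, q) ∈ M → I.sPref s p q ∧ ¬I.sPref s q p) ∧
  (((projAsg M p).card < I.c p ∧ (lecAsg I M (I.lec p)).card < I.d (I.lec p)) ∨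
   ((projAsg M p).card < I.c p ∧ (lecAsg I M (I.lec p)).card = I.d (I.lec p) ∧
     (s ∈ lecAsg I M (I.lec p) ∨
      ∃ t : S, WorstIn I (I.lec p) (lecAsg I M (I.lec p)) t ∧
        (I.lPref (I.lec p) s t ∧ ¬I.lPref (I.lec p) t s))) ∨
   ((projAsg M p).card = I.c p ∧
     ∃ t : S, WorstIn I (I.lec p) (projAsg M p) t ∧
       (I.lPref (I.lec p) s t ∧ ¬I.lPref (I.lec p) t s)))

/-- `M` is a super-stable matching in `I`. -/
def SuperStable (I : SPAST S P L) (M : Finset (S × P)) : Prop :=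
  I.IsMatching M ∧ ∀ (s : S) (p : P), ¬SuperBlocking I M s p

/-- `M` is a weakly stable matching in `I`. -/
def WeaklyStable (I : SPAST S P L) (M : Finset (S × P)) : Prop :=
  I.IsMatching M ∧ ∀ (s : S) (p : P), ¬WeakBlocking I M s p

/-- `I` is an SPA-S instance: all preference lists are strictly ordered
(the preorders are antisymmetric). -/
def StrictPrefs (I : SPAST S P L) : Prop :=
  (∀ s : S, ∀ p ∈ I.acc s, ∀ q ∈ I.acc s, I.sPref s p q → I.sPref s q p → p = q) ∧
  (∀ k : L, ∀ t t' : S, (∃ p ∈ I.acc t, I.lec p = k) → (∃ p ∈ I.acc t', I.lec p = k) →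
    I.lPref k t t' → I.lPref k t' t → t = t')

/-- `I'` is an SPA-S instance obtained from `I` by breaking the ties. -/
def TieBreaking (I I' : SPAST S P L) : Prop :=
  I'.lec = I.lec ∧ I'.c = I.c ∧ I'.d = I.d ∧ I'.acc = I.acc ∧
  StrictPrefs I' ∧
  (∀ (s : S) (p q : P), I.sPref s p q → ¬I.sPref s q p →
    I'.sPref s p q ∧ ¬I'.sPref s q p) ∧
  (∀ (k : L) (t t' : S), I.lPref k t t' → ¬I.lPref k t' t →
    I'.lPref k t t' ∧ ¬I'.lPref k t' t)

end SPAST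


/-!
For super-stable matchings `M` and `N`, call a pair `(s, p) ∈ M \ N` *tempted* if `s` does
not strictly prefer its `N`-project to `p`. Since `(s, p)` does not super-block `N`, either `p`
is full in `N` and `l(p)` strictly prefers every student of `N(p)` to `s`, or `l(p)` is full in
`N` and strictly prefers every student of `N(l(p))` to `s`. A capacity count at each project
then shows that at every lecturer `k` there are at most as many tempted pairs of `M \ N` as
untempted pairs of `N \ M`. Conversely, if `(s, q) ∈ N \ M` is untempted, `s` strictly prefers
its `M`-project `p` to `q`, and `(s, p)` is a tempted pair of `M \ N`; summing over lecturers
forces equality at each `k`. Splitting `M(k)` into the pairs of `M ∩ N`, the tempted and the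
untempted pairs, and `N(k)` likewise, the two counts agree.
-/

open Finset

theorem Finset.card_filter_sdiff_add_card_filter_inter {α : Type*} [DecidableEq α]
    (A B : Finset α) (q : α → Prop) [DecidablePred q] :
    #{x ∈ A \ B | q x} + #{x ∈ A ∩ B | q x} = #{x ∈ A | q x} := by
  rw [← card_union_of_disjoint (disjoint_filter_filter (disjoint_sdiff_inter A B)),
    ← filter_union, sdiff_union_inter]

namespace SPAST

variable {S P L : Type} [DecidableEq S] [DecidableEq P] {N : Finset (S × P)} {s t : S} {p : P}

@[simp]
theorem mem_projAsg : t ∈ projAsg N p ↔ (t, p) ∈ N := by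
  simp [projAsg]

theorem card_projAsg : #(projAsg N p) = #{x ∈ N | x.2 = p} :=
  card_image_of_injOn fun _ hx _ hy hxy =>
    Prod.ext hxy ((mem_filter.1 hx).2.trans (mem_filter.1 hy).2.symm)

variable [Fintype S] [Fintype P] [Fintype L] [DecidableEq L] {I : SPAST S P L}
  {M : Finset (S × P)} {k : L}

@[simp]
theorem mem_lecAsg : t ∈ lecAsg I N k ↔ ∃ q, (t, q) ∈ N ∧ I.lec q = k := by
  simp [lecAsg]

theorem projAsg_subset_lecAsg : projAsg N p ⊆ lecAsg I N (I.lec p) := fun _ ht =>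
  mem_lecAsg.2 ⟨p, mem_projAsg.1 ht, rfl⟩

theorem IsMatching.card_lecAsg (hN : I.IsMatching N) (k : L) :
    #(lecAsg I N k) = #{x ∈ N | I.lec x.2 = k} := by
  refine card_image_of_injOn fun x hx y hy (hxy : x.1 = y.1) => Prod.ext hxy ?_
  exact hN.2.1 x.1 x.2 y.2 (mem_filter.1 hx).1 (hxy ▸ (mem_filter.1 hy).1)

theorem IsMatching.exists_acc_of_mem_lecAsg (hN : I.IsMatching N) (ht : t ∈ lecAsg I N k) :
    ∃ q ∈ I.acc t, I.lec q = k := by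
  obtain ⟨q, hq, rfl⟩ := mem_lecAsg.1 ht
  exact ⟨q, hN.1 _ hq, rfl⟩

theorem exists_worstIn {T : Finset S} (hT : T.Nonempty)
    (hTk : ∀ t ∈ T, ∃ q ∈ I.acc t, I.lec q = k) : ∃ w, I.WorstIn k T w := by
  induction T using Finset.induction_on with
  | empty => simp at hT
  | insert a T _ ih =>
    have ha := hTk a (mem_insert_self a T)
    rcases T.eq_empty_or_nonempty with rfl | hT
    · exact ⟨a, by simpa [WorstIn] using I.lRefl k a ha⟩
    obtain ⟨w, hwT, hw⟩ := ih hT fun t ht => hTk t (mem_insert_of_mem ht)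
    have hwk := hTk w (mem_insert_of_mem hwT)
    rcases I.lTotal k a w ha hwk with haw | hwa
    · exact ⟨w, mem_insert_of_mem hwT, forall_mem_insert _ _ _ |>.2 ⟨haw, hw⟩⟩
    · refine ⟨a, mem_insert_self a T, forall_mem_insert _ _ _ |>.2 ⟨I.lRefl k a ha, ?_⟩⟩
      exact fun t ht => I.lTrans k t w a (hTk t (mem_insert_of_mem ht)) hwk ha (hw t ht) hwa

def AllOutrank (I : SPAST S P L) (k : L) (T : Finset S) (s : S) : Prop :=
  ∀ t ∈ T, I.lPref k t s ∧ ¬I.lPref k s t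

theorem allOutrank_of_not_exists_worstIn {T : Finset S} (hT : T.Nonempty)
    (hTk : ∀ t ∈ T, ∃ q ∈ I.acc t, I.lec q = k) (hs : ∃ q ∈ I.acc s, I.lec q = k)
    (h : ¬∃ w, I.WorstIn k T w ∧ I.lPref k s w) : I.AllOutrank k T s := by
  obtain ⟨w, hwT, hw⟩ := exists_worstIn hT hTk
  intro t ht
  have hst : ¬I.lPref k s t := fun hst =>
    h ⟨w, ⟨hwT, hw⟩, I.lTrans k s t w hs (hTk t ht) (hTk w hwT) hst (hw t ht)⟩
  exact ⟨(I.lTotal k t s (hTk t ht) hs).resolve_right hst, hst⟩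

/-- Condition (a) of a super-blocking pair `(s, p)` for `N`. -/
def Tempted (I : SPAST S P L) (N : Finset (S × P)) (s : S) (p : P) : Prop :=
  ∀ q, (s, q) ∈ N → ¬(I.sPref s q p ∧ ¬I.sPref s p q)

theorem SuperStable.allOutrank_projAsg_of_full (hN : I.SuperStable N)
    (hp : p ∈ I.acc s) (hsp : (s, p) ∉ N) (hs : I.Tempted N s p)
    (hfull : #(projAsg N p) = I.c p) :
    I.AllOutrank (I.lec p) (projAsg N p) s :=
  allOutrank_of_not_exists_worstIn (card_pos.1 (hfull ▸ I.cpos p))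
    (fun _ ht => hN.1.exists_acc_of_mem_lecAsg (projAsg_subset_lecAsg ht)) ⟨p, hp, rfl⟩
    fun hw => hN.2 s p ⟨hp, hsp, hs, Or.inr (Or.inr ⟨hfull, hw⟩)⟩

theorem SuperStable.lecAsg_full_and_allOutrank (hN : I.SuperStable N)
    (hp : p ∈ I.acc s) (hsp : (s, p) ∉ N) (hs : I.Tempted N s p)
    (hfull : #(projAsg N p) ≠ I.c p) :
    #(lecAsg I N (I.lec p)) = I.d (I.lec p) ∧
      I.AllOutrank (I.lec p) (lecAsg I N (I.lec p)) s := by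
  have hblock : ¬_ := fun h => hN.2 s p ⟨hp, hsp, hs, h⟩
  have hpc : #(projAsg N p) < I.c p := (card_projAsg (N := N) ▸ hN.1.2.2.1 p).lt_of_ne hfull
  have hlec : #(lecAsg I N (I.lec p)) = I.d (I.lec p) :=
    ((hN.1.card_lecAsg _).trans_le (hN.1.2.2.2 _)).eq_of_not_lt fun hlt =>
      hblock (Or.inl ⟨hpc, hlt⟩)
  refine ⟨hlec, allOutrank_of_not_exists_worstIn (card_pos.1 (hlec ▸ I.dpos _))
    (fun _ => hN.1.exists_acc_of_mem_lecAsg) ⟨p, hp, rfl⟩ fun hw => ?_⟩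
  exact hblock (Or.inr (Or.inl ⟨hpc, hlec, Or.inr hw⟩))

theorem SuperStable.allOutrank_projAsg (hN : I.SuperStable N)
    (hp : p ∈ I.acc s) (hsp : (s, p) ∉ N) (hs : I.Tempted N s p) :
    I.AllOutrank (I.lec p) (projAsg N p) s := by
  by_cases hfull : #(projAsg N p) = I.c p
  · exact hN.allOutrank_projAsg_of_full hp hsp hs hfull
  · exact fun t ht =>
      (hN.lecAsg_full_and_allOutrank hp hsp hs hfull).2 t (projAsg_subset_lecAsg ht)

noncomputable def temptedPairs (I : SPAST S P L) (M N : Finset (S × P)) : Finset (S × P) :=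
  {x ∈ M \ N | I.Tempted N x.1 x.2}

noncomputable def untemptedPairs (I : SPAST S P L) (M N : Finset (S × P)) : Finset (S × P) :=
  {x ∈ M \ N | ¬I.Tempted N x.1 x.2}

theorem SuperStable.not_tempted_of_mem_temptedPairs (hM : I.SuperStable M)
    (hN : I.SuperStable N) (hx : (s, p) ∈ temptedPairs I M N) (ht : (t, p) ∈ N \ M) :
    ¬I.Tempted M t p := fun htp => by
  obtain ⟨hsp, hs⟩ := mem_filter.1 hx
  obtain ⟨hsM, hsN⟩ := mem_sdiff.1 hsp
  obtain ⟨htN, htM⟩ := mem_sdiff.1 ht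
  exact (hN.allOutrank_projAsg (hM.1.1 _ hsM) hsN hs t (mem_projAsg.2 htN)).2
    (hM.allOutrank_projAsg (hN.1.1 _ htN) htM htp s (mem_projAsg.2 hsM)).1

theorem IsMatching.card_filter_sdiff_le_of_full (hM : I.IsMatching M)
    (hfull : #(projAsg N p) = I.c p) :
    #{x ∈ M \ N | x.2 = p} ≤ #{x ∈ N \ M | x.2 = p} := by
  have hMp := hM.2.2.1 p
  rw [card_projAsg] at hfull
  have hM_split := card_filter_sdiff_add_card_filter_inter M N (·.2 = p)
  have hN_split := card_filter_sdiff_add_card_filter_inter N M (·.2 = p)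
  rw [inter_comm] at hN_split
  omega

theorem card_filter_lec_eq_sum (X : Finset (S × P)) (k : L) :
    #{x ∈ X | I.lec x.2 = k} = ∑ p ∈ {p | I.lec p = k}, #{x ∈ X | x.2 = p} := by
  rw [sum_card_fiberwise_eq_card_filter]
  simp

theorem card_temptedPairs_le_of_full (hM : I.SuperStable M) (hN : I.SuperStable N)
    (hfull : ∀ x ∈ temptedPairs I M N, I.lec x.2 = k → #(projAsg N x.2) = I.c x.2) :
    #{x ∈ temptedPairs I M N | I.lec x.2 = k} ≤
      #{y ∈ untemptedPairs I N M | I.lec y.2 = k} := by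
  rw [card_filter_lec_eq_sum, card_filter_lec_eq_sum]
  refine sum_le_sum fun p hp => ?_
  obtain h | ⟨⟨s, q⟩, hx⟩ := eq_empty_or_nonempty {x ∈ temptedPairs I M N | x.2 = p}
  · simp [h]
  obtain ⟨hsp, rfl : q = p⟩ := mem_filter.1 hx
  have hsub : {y ∈ N \ M | y.2 = q} ⊆ {y ∈ untemptedPairs I N M | y.2 = q} := by
    rintro ⟨t, r⟩ hy
    obtain ⟨ht, rfl : r = q⟩ := mem_filter.1 hy
    have htr := hM.not_tempted_of_mem_temptedPairs hN hsp ht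
    exact mem_filter.2 ⟨mem_filter.2 ⟨ht, htr⟩, rfl⟩
  calc #{x ∈ temptedPairs I M N | x.2 = q}
      ≤ #{x ∈ M \ N | x.2 = q} := card_le_card (filter_subset_filter _ (filter_subset _ _))
    _ ≤ #{y ∈ N \ M | y.2 = q} :=
      hM.1.card_filter_sdiff_le_of_full (hfull _ hsp (mem_filter.1 hp).2)
    _ ≤ #{y ∈ untemptedPairs I N M | y.2 = q} := card_le_card hsub

theorem card_filter_lec_eq_add (M N : Finset (S × P)) (k : L) :
    #{x ∈ M | I.lec x.2 = k} = #{x ∈ M ∩ N | I.lec x.2 = k} +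
      #{x ∈ temptedPairs I M N | I.lec x.2 = k} +
      #{x ∈ untemptedPairs I M N | I.lec x.2 = k} := by
  have hsplit := card_filter_sdiff_add_card_filter_inter M N (I.lec ·.2 = k)
  have htempted : #{x ∈ temptedPairs I M N | I.lec x.2 = k} +
      #{x ∈ untemptedPairs I M N | I.lec x.2 = k} = #{x ∈ M \ N | I.lec x.2 = k} := by
    rw [temptedPairs, untemptedPairs, filter_comm, filter_comm (fun x => ¬_)]
    exact card_filter_add_card_filter_not _
  omega

theorem SuperStable.card_temptedPairs_le (hM : I.SuperStable M) (hN : I.SuperStable N)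
    (k : L) :
    #{x ∈ temptedPairs I M N | I.lec x.2 = k} ≤
      #{y ∈ untemptedPairs I N M | I.lec y.2 = k} := by
  by_cases hfull : ∀ x ∈ temptedPairs I M N, I.lec x.2 = k → #(projAsg N x.2) = I.c x.2
  · exact card_temptedPairs_le_of_full hM hN hfull
  push Not at hfull
  obtain ⟨⟨s, p⟩, hsp, hk : I.lec p = k, hnf : #(projAsg N p) ≠ I.c p⟩ := hfull
  subst hk
  obtain ⟨hspMN, hs⟩ := mem_filter.1 hsp
  obtain ⟨hsM, hsN⟩ := mem_sdiff.1 hspMN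
  -- `l(p)` is full in `N` and prefers all of `N(l(p))` to `s ∈ M(l(p))`, so the symmetric
  -- inequality falls under the first case, and `|M(l(p))| ≤ d = |N(l(p))|` turns it around.
  obtain ⟨hNfull, hNs⟩ := hN.lecAsg_full_and_allOutrank (hM.1.1 _ hsM) hsN hs hnf
  have hsymm : #{x ∈ temptedPairs I N M | I.lec x.2 = I.lec p} ≤
      #{y ∈ untemptedPairs I M N | I.lec y.2 = I.lec p} := by
    refine card_temptedPairs_le_of_full hN hM fun ⟨t, q⟩ htq hq => ?_
    by_contra hnf'
    obtain ⟨htqNM, ht⟩ := mem_filter.1 htq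
    obtain ⟨htN, htM⟩ := mem_sdiff.1 htqNM
    obtain ⟨-, hMt⟩ := hM.lecAsg_full_and_allOutrank (hN.1.1 _ htN) htM ht hnf'
    rw [hq] at hMt
    exact (hMt s (mem_lecAsg.2 ⟨p, hsM, rfl⟩)).2 (hNs t (mem_lecAsg.2 ⟨q, htN, hq⟩)).1
  have hcap : #{x ∈ M | I.lec x.2 = I.lec p} ≤ #{x ∈ N | I.lec x.2 = I.lec p} := by
    rw [← hN.1.card_lecAsg, hNfull]
    exact hM.1.2.2.2 _
  have hM_split := card_filter_lec_eq_add (I := I) M N (I.lec p)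
  have hN_split := card_filter_lec_eq_add (I := I) N M (I.lec p)
  rw [inter_comm] at hN_split
  omega

theorem IsMatching.card_untemptedPairs_le (hN : I.IsMatching N) :
    #(untemptedPairs I N M) ≤ #(temptedPairs I M N) := by
  refine card_le_card_of_forall_subsingleton (fun y x => y.1 = x.1) ?_ ?_
  · rintro ⟨s, q⟩ hsq
    obtain ⟨hsqNM, hsq⟩ := mem_filter.1 hsq
    obtain ⟨hsN, hsM⟩ := mem_sdiff.1 hsqNM
    simp only [Tempted, not_forall, not_not] at hsq
    obtain ⟨q', hsq', hpref, hnpref⟩ := hsq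
    refine ⟨(s, q'), mem_filter.2 ⟨mem_sdiff.2 ⟨hsq', fun hq'N => ?_⟩, fun r hr => ?_⟩,
      rfl⟩
    · obtain rfl := hN.2.1 s q q' hsN hq'N
      exact hnpref hpref
    · obtain rfl := hN.2.1 s q r hsN hr
      exact fun h => hnpref h.1
  · intro _ _ y ⟨hy, hyx⟩ y' ⟨hy', hy'x⟩
    have hyy' : y.1 = y'.1 := hyx.trans hy'x.symm
    exact Prod.ext hyy' (hN.2.1 _ _ _ (mem_sdiff.1 (mem_filter.1 hy).1).1
      (hyy' ▸ (mem_sdiff.1 (mem_filter.1 hy').1).1))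

theorem SuperStable.card_temptedPairs_eq (hM : I.SuperStable M) (hN : I.SuperStable N)
    (k : L) :
    #{x ∈ temptedPairs I M N | I.lec x.2 = k} =
      #{y ∈ untemptedPairs I N M | I.lec y.2 = k} := by
  have hle := fun k (_ : k ∈ univ) => hM.card_temptedPairs_le hN k
  refine (sum_eq_sum_iff_of_le hle).1 (le_antisymm (sum_le_sum hle) ?_) k (mem_univ k)
  rw [← card_eq_sum_card_fiberwise (fun _ _ => mem_univ _),
    ← card_eq_sum_card_fiberwise (fun _ _ => mem_univ _)]
  exact hN.1.card_untemptedPairs_le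

end SPAST

open SPAST in
theorem super_stable_lecturer_counts_eq {S P L : Type} [Fintype S] [Fintype P] [Fintype L]
    [DecidableEq S] [DecidableEq P] [DecidableEq L]
    (I : SPAST S P L) (M1 M2 : Finset (S × P))
    (h1 : SuperStable I M1) (h2 : SuperStable I M2) :
    ∀ k : L, (lecAsg I M1 k).card = (lecAsg I M2 k).card := by
  intro k
  rw [h1.1.card_lecAsg, h2.1.card_lecAsg, card_filter_lec_eq_add M1 M2,
    card_filter_lec_eq_add M2 M1, Finset.inter_comm, h1.card_temptedPairs_eq h2,
    h2.card_temptedPairs_eq h1]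
  omega
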